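/- Let λ, μ be partitions of length at most d and define TW(λ,μ) = det(A·B) with A_{i,k} = h̃_{i−k+μ_{d−i+1}}, B_{k,j} = h_{j−k+λ_{d−j+1}}. Then TW(λ,μ) = det( TW((λ_i + d − i), (μ_j + d − j)) )_{1 ≤ i,j ≤ d}, where TW((r),(s)) = Σ_{k=0}^{min(r,s)} h_{r−k} h̃_{s−k}. -/

import Mathlib

open Finset MvPolynomial

open scoped Classical

noncomputable section

/-- The ring of symmetric functions over `ℚ`, presented via the power sums
`p 1, p 2, …` as free commutative generators (variable `i` corresponds to `p (i+1)`). -/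
abbrev SymF : Type := MvPolynomial ℕ ℚ

/-- The ring of symmetric functions in two independent countable variable sets `X`, `Y`. -/
abbrev SymF2 : Type := MvPolynomial (ℕ ⊕ ℕ) ℚ

/-- The power sum `p k` (for `k ≥ 1`). -/
def P (k : ℕ) : SymF := X (k - 1)

/-- The power sum `p k (X)` in the first variable set. -/
def PX (k : ℕ) : SymF2 := X (Sum.inl (k - 1))

/-- The power sum `p̃ k (Y)` in the second variable set. -/
def PY (k : ℕ) : SymF2 := X (Sum.inr (k - 1))

/-- `z λ = ∏ i, i ^ m_i(λ) * m_i(λ)!`, where `m_i(λ)` is the number of parts of `λ` equal to `i`. -/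
def zPart {n : ℕ} (μ : n.Partition) : ℚ :=
  (μ.parts.map fun i => (i : ℚ)).prod *
    ∏ i ∈ μ.parts.toFinset, (Nat.factorial (μ.parts.count i) : ℚ)

/-- `p_μ = ∏ i p_{μ_i}`, generically: given the values `pv k` of the power sums. -/
def pPart {A : Type} [CommRing A] (pv : ℕ → A) {n : ℕ} (μ : n.Partition) : A :=
  (μ.parts.map pv).prod

/-- The complete homogeneous symmetric function `h_n = ∑_{μ ⊢ n} z_μ⁻¹ p_μ`, generically. -/
def hFun {A : Type} [CommRing A] [Algebra ℚ A] (pv : ℕ → A) (n : ℕ) : A :=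
  ∑ μ : n.Partition, (zPart μ)⁻¹ • pPart pv μ

/-- `h_m` for an integer index, with `h_m = 0` for `m < 0`. -/
def hInt {A : Type} [CommRing A] [Algebra ℚ A] (pv : ℕ → A) (m : ℤ) : A :=
  if m < 0 then 0 else hFun pv m.toNat

/-- The `i`-th largest part (1-indexed) of a partition; `0` if `i` exceeds the length. -/
def nthPart {n : ℕ} (μ : n.Partition) (i : ℕ) : ℕ :=
  ((μ.parts.sort (· ≤ ·)).reverse).getD (i - 1) 0

/-- The Schur function `s_λ`, via the Jacobi–Trudi determinant
`det (h_{λ_i - i + j})`, given the values `hv` of the complete homogeneous functions. -/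
def schurJT {A : Type} [CommRing A] (hv : ℤ → A) {n : ℕ} (lam : n.Partition) : A :=
  Matrix.det (Matrix.of fun i j : Fin lam.parts.card =>
    hv ((nthPart lam ((i : ℕ) + 1) : ℤ) - ((i : ℕ) + 1) + ((j : ℕ) + 1)))

/-- The skew Schur function `s_{λ/ν}`, via the Jacobi–Trudi determinant
`det (h_{λ_i - ν_j - i + j})_{d × d}` (valid whenever `d ≥ max (l(λ), l(ν))`). -/
def skewJT {A : Type} [CommRing A] (hv : ℤ → A) {n m : ℕ}
    (lam : n.Partition) (nu : m.Partition) (d : ℕ) : A :=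
  Matrix.det (Matrix.of fun i j : Fin d =>
    hv ((nthPart lam ((i : ℕ) + 1) : ℤ) - nthPart nu ((j : ℕ) + 1)
      - ((i : ℕ) + 1) + ((j : ℕ) + 1)))

/-- The Schur function `s_λ` in the ring of symmetric functions. -/
def schurF {n : ℕ} (lam : n.Partition) : SymF := schurJT (hInt P) lam

/-- The Schur function `s_λ(X)` in the first variable set. -/
def sX {n : ℕ} (lam : n.Partition) : SymF2 := schurJT (hInt PX) lam

/-- The Schur function `s_μ(Y)` in the second variable set. -/
def sY {n : ℕ} (lam : n.Partition) : SymF2 := schurJT (hInt PY) lam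

/-- `B` is the Hall inner product: the bilinear form making the Schur functions orthonormal. -/
def IsHall (B : SymF →ₗ[ℚ] SymF →ₗ[ℚ] ℚ) : Prop :=
  ∀ {n m : ℕ} (lam : n.Partition) (mu : m.Partition),
    B (schurF lam) (schurF mu) =
      if (⟨n, lam⟩ : Σ k : ℕ, k.Partition) = ⟨m, mu⟩ then 1 else 0

/-- `B` is the Hall inner product on `Λ(X) ⊗ Λ(Y)`: the bilinear form making the
products of Schur functions `s_λ(X) s_μ(Y)` orthonormal. -/
def IsHall2 (B : SymF2 →ₗ[ℚ] SymF2 →ₗ[ℚ] ℚ) : Prop :=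
  ∀ {n m n' m' : ℕ} (a : n.Partition) (b : m.Partition) (c : n'.Partition) (e : m'.Partition),
    B (sX a * sY b) (sX c * sY e) =
      if (⟨n, a⟩ : Σ k : ℕ, k.Partition) = ⟨n', c⟩ ∧
         (⟨m, b⟩ : Σ k : ℕ, k.Partition) = ⟨m', e⟩ then 1 else 0


/-- The Tracy–Widom matrix: the `d × d` product `A · B` of the half-strip matrices
`A = (h̃_{i-k+μ_{d-i+1}})_{d × ∞}` and `B = (h_{j-k+λ_{d-j+1}})_{∞ × d}`; the inner sum over
`k ≥ 1` is truncated at `d + n + m`, beyond which all terms vanish. -/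
def TWmat {n m : ℕ} (lam : n.Partition) (mu : m.Partition) (d : ℕ) :
    Matrix (Fin d) (Fin d) SymF2 :=
  Matrix.of fun i j => ∑ k ∈ Icc 1 (d + n + m),
    hInt PY (((i : ℕ) : ℤ) + 1 - (k : ℤ) + nthPart mu (d - (i : ℕ))) *
    hInt PX (((j : ℕ) : ℤ) + 1 - (k : ℤ) + nthPart lam (d - (j : ℕ)))

/-- The rank-one Tracy–Widom expression `R(r,s) = ∑_{k=0}^{min(r,s)} h̃_{s-k} h_{r-k}`. -/
def Rrs (r s : ℕ) : SymF2 :=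
  ∑ k ∈ range (min r s + 1), hInt PY ((s : ℤ) - (k : ℤ)) * hInt PX ((r : ℤ) - (k : ℤ))

/-! Since `h_k = 0` for `k < 0`, the `(i, j)` entry of `A · B` is `R(λ_{d-j} + j, μ_{d-i} + i)`.
Hence `A · B` is the matrix `(R(λ_i + d - i, μ_j + d - j))` transposed and with rows and columns
reversed, which does not change the determinant. -/

lemma hInt_of_neg {A : Type} [CommRing A] [Algebra ℚ A] (pv : ℕ → A) {k : ℤ} (h : k < 0) :
    hInt pv k = 0 := if_pos h

lemma nthPart_le {n : ℕ} (μ : n.Partition) (i : ℕ) : nthPart μ i ≤ n := by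
  unfold nthPart
  set L := (μ.parts.sort (· ≤ ·)).reverse
  rcases lt_or_ge (i - 1) L.length with h | h
  · have hmem : L.getD (i - 1) 0 ∈ μ.parts := by
      rw [List.getD_eq_getElem L 0 h, ← Multiset.mem_sort (· ≤ ·), ← List.mem_reverse]
      exact List.getElem_mem h
    exact (Multiset.le_sum_of_mem hmem).trans_eq μ.parts_sum
  · rw [List.getD_eq_default _ _ h]
    exact Nat.zero_le n

lemma sum_range_hInt_mul_hInt_of_min_lt {A : Type} [CommRing A] [Algebra ℚ A] (pv qv : ℕ → A)
    {r s N : ℕ} (hN : min r s < N) :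
    ∑ k ∈ range N, hInt pv ((s : ℤ) - k) * hInt qv ((r : ℤ) - k) =
      ∑ k ∈ range (min r s + 1), hInt pv ((s : ℤ) - k) * hInt qv ((r : ℤ) - k) := by
  refine (sum_subset (range_subset_range.mpr hN) fun k _ hk => ?_).symm
  rw [mem_range, not_lt] at hk
  rcases min_cases r s with ⟨h, _⟩ | ⟨h, _⟩
  · rw [hInt_of_neg qv (by omega), mul_zero]
  · rw [hInt_of_neg pv (by omega), zero_mul]

lemma TWmat_apply {n m : ℕ} (lam : n.Partition) (mu : m.Partition) (d : ℕ) (i j : Fin d) :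
    TWmat lam mu d i j =
      Rrs (nthPart lam (d - j) + j) (nthPart mu (d - i) + i) := by
  have hN : min (nthPart lam (d - j) + j) (nthPart mu (d - i) + i) < d + n + m := by
    have := nthPart_le lam (d - j)
    have := j.isLt
    omega
  rw [Rrs, ← sum_range_hInt_mul_hInt_of_min_lt PY PX hN, TWmat, Matrix.of_apply,
    ← Ico_add_one_right_eq_Icc, sum_Ico_eq_sum_range, Nat.add_sub_cancel]
  refine sum_congr rfl fun k _ => ?_
  congr 2 <;> push_cast <;> ring

lemma TWmat_eq_submatrix_revPerm {n m : ℕ} (lam : n.Partition) (mu : m.Partition) (d : ℕ) :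
    TWmat lam mu d =
      (Matrix.of fun i j : Fin d =>
        Rrs (nthPart lam ((i : ℕ) + 1) + d - ((i : ℕ) + 1))
          (nthPart mu ((j : ℕ) + 1) + d - ((j : ℕ) + 1))).transpose.submatrix
        Fin.revPerm Fin.revPerm := by
  ext i j : 1
  have := i.isLt
  have := j.isLt
  rw [TWmat_apply, Matrix.submatrix_apply, Matrix.transpose_apply, Matrix.of_apply,
    Fin.revPerm_apply, Fin.revPerm_apply, Fin.val_rev, Fin.val_rev,
    show d - (j + 1) + 1 = d - j by omega, show d - (i + 1) + 1 = d - i by omega]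
  congr 1 <;> omega

theorem stmt_15_general {n m : ℕ} (lam : n.Partition) (mu : m.Partition) (d : ℕ) :
    (TWmat lam mu d).det = Matrix.det (Matrix.of fun i j : Fin d =>
      Rrs (nthPart lam ((i : ℕ) + 1) + d - ((i : ℕ) + 1))
          (nthPart mu ((j : ℕ) + 1) + d - ((j : ℕ) + 1))) := by
  rw [TWmat_eq_submatrix_revPerm, Matrix.det_submatrix_equiv_self, Matrix.det_transpose]

/-- `TW(λ,μ) = det ( TW((λ_i + d - i), (μ_j + d - j)) )_{1 ≤ i,j ≤ d}`. -/
theorem stmt_15 {n m : ℕ} (lam : n.Partition) (mu : m.Partition) (d : ℕ)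
    (hl : lam.parts.card ≤ d) (hm : mu.parts.card ≤ d) :
    (TWmat lam mu d).det = Matrix.det (Matrix.of fun i j : Fin d =>
      Rrs (nthPart lam ((i : ℕ) + 1) + d - ((i : ℕ) + 1))
          (nthPart mu ((j : ℕ) + 1) + d - ((j : ℕ) + 1))) :=
  stmt_15_general lam mu d
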